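/- arXiv:2504.05655 — 2 statements merged into one kernel-verified Lean document; each statement's English description precedes it below -/
import Mathlib

section
/- The degree-2 H-bubble W solves the H-system on all of ℝ²: at every point (x,y) ∈ ℝ², ΔW(x,y) = 2 W_x(x,y) ∧ W_y(x,y). -/
noncomputable section

/-- `ℝ³` with the Euclidean norm. -/
abbrev R3 : Type := EuclideanSpace ℝ (Fin 3)

/-- The vector in `ℝ³` with the given coordinates. -/
def e3 (a b c : ℝ) : R3 := (WithLp.equiv 2 (Fin 3 → ℝ)).symm ![a, b, c]

/-- The cross product on `ℝ³`. -/
def cross (a b : R3) : R3 :=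
  e3 (a 1 * b 2 - a 2 * b 1) (a 2 * b 0 - a 0 * b 2) (a 0 * b 1 - a 1 * b 0)

/-- Partial derivative in the `x` direction, identifying `ℝ²` with `ℂ` via `z = x + iy`. -/
def pdx (u : ℂ → R3) (z : ℂ) : R3 := fderiv ℝ u z 1

/-- Partial derivative in the `y` direction. -/
def pdy (u : ℂ → R3) (z : ℂ) : R3 := fderiv ℝ u z Complex.I

/-- Componentwise Laplacian. -/
def lap (u : ℂ → R3) (z : ℂ) : R3 := pdx (pdx u) z + pdy (pdy u) z

/-- `u` is a `C²` solution of the H-system `Δu = 2 uₓ ∧ u_y` on `Ω`. -/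
def IsHSolution (u : ℂ → R3) (Ω : Set ℂ) : Prop :=
  ContDiffOn ℝ 2 u Ω ∧ ∀ z ∈ Ω, lap u z = (2 : ℝ) • cross (pdx u z) (pdy u z)

/-- The degree-2 H-bubble `W = π(z²)`. -/
def W : ℂ → R3 := fun z =>
  e3 (2 * (z.re ^ 2 - z.im ^ 2) / ((z.re ^ 2 + z.im ^ 2) ^ 2 + 1))
    (4 * z.re * z.im / ((z.re ^ 2 + z.im ^ 2) ^ 2 + 1))
    (((z.re ^ 2 + z.im ^ 2) ^ 2 - 1) / ((z.re ^ 2 + z.im ^ 2) ^ 2 + 1))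

/-!
Both sides of the H-system are multiples of `W` itself: with `r = x² + y²` and `D = r² + 1`,
`ΔW = -(32 r / D²) W` and `W_x ∧ W_y = -(16 r / D²) W`, since `W` is a conformal harmonic
map into the unit sphere with energy density `|∇W|² = 32 r / D²`. Second partial derivatives
of a `C²` map are second derivatives along horizontal and vertical lines, which reduces
everything to one-variable calculus; and since swapping `x` and `y` turns `(W₁, W₂, W₃)` into
`(-W₁, W₂, W₃)`, only `x`-derivatives of the components have to be computed.
-/

open Complex

section LineDerivatives

variable {E F : Type*} [NormedAddCommGroup E] [NormedSpace ℝ E]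
  [NormedAddCommGroup F] [NormedSpace ℝ F] {u : E → F}

lemma hasDerivAt_comp_add_smul {z v : E} {t : ℝ} (hu : DifferentiableAt ℝ u (z + t • v)) :
    HasDerivAt (fun s : ℝ => u (z + s • v)) (fderiv ℝ u (z + t • v) v) t := by
  have hline : HasDerivAt (fun s : ℝ => z + s • v) v t := by
    simpa using ((hasDerivAt_id t).smul_const v).const_add z
  exact hu.hasFDerivAt.comp_hasDerivAt t hline

lemma fderiv_apply_eq_deriv_comp_add_smul {z : E} (hu : DifferentiableAt ℝ u z) (v : E) :
    fderiv ℝ u z v = deriv (fun t : ℝ => u (z + t • v)) 0 := by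
  rw [← hu.lineDeriv_eq_fderiv, lineDeriv]

lemma fderiv_fderiv_apply_eq_deriv_deriv_comp_add_smul (hu : ContDiff ℝ 2 u) (z v : E) :
    fderiv ℝ (fun w => fderiv ℝ u w v) z v = deriv (deriv fun t : ℝ => u (z + t • v)) 0 := by
  have hderiv : deriv (fun t : ℝ => u (z + t • v)) = fun t => fderiv ℝ u (z + t • v) v :=
    funext fun t => (hasDerivAt_comp_add_smul (hu.differentiable two_ne_zero _)).deriv
  have hu' : Differentiable ℝ fun w => fderiv ℝ u w v :=
    ((hu.fderiv_right (m := 1) le_rfl).clm_apply contDiff_const).differentiable one_ne_zero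
  rw [hderiv, fderiv_apply_eq_deriv_comp_add_smul (hu' z)]

end LineDerivatives

section ShiftedDerivatives

variable {F : Type*} [NormedAddCommGroup F] [NormedSpace ℝ F] {f f' : ℝ → F} {a : ℝ}

lemma deriv_comp_const_add_zero {f' : F} (hf : HasDerivAt f f' a) :
    deriv (fun t => f (a + t)) 0 = f' := by
  rw [deriv_comp_const_add, add_zero, hf.deriv]

lemma deriv_deriv_comp_const_add_zero {f'' : F} (hf : ∀ s, HasDerivAt f (f' s) s)
    (hf' : HasDerivAt f' f'' a) : deriv (deriv fun t => f (a + t)) 0 = f'' := by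
  have hderiv : deriv (fun t => f (a + t)) = fun t => f' (a + t) :=
    funext fun t => ((hf (a + t)).comp_const_add a t).deriv
  rw [hderiv, deriv_comp_const_add_zero hf']

end ShiftedDerivatives

lemma e3_eq_smul_add (a b c : ℝ) : e3 a b c = a • e3 1 0 0 + b • e3 0 1 0 + c • e3 0 0 1 := by
  ext i; fin_cases i <;> simp [e3]

lemma HasDerivAt.e3 {f g h : ℝ → ℝ} {f' g' h' t : ℝ} (hf : HasDerivAt f f' t)
    (hg : HasDerivAt g g' t) (hh : HasDerivAt h h' t) :
    HasDerivAt (fun s => e3 (f s) (g s) (h s)) (e3 f' g' h') t := by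
  rw [e3_eq_smul_add f' g' h', show (fun s => _root_.e3 (f s) (g s) (h s)) = _ from
    funext fun s => e3_eq_smul_add (f s) (g s) (h s)]
  exact ((hf.smul_const _).add (hg.smul_const _)).add (hh.smul_const _)

def bubbleDen (x y : ℝ) : ℝ := (x ^ 2 + y ^ 2) ^ 2 + 1

def W₁ (x y : ℝ) : ℝ := 2 * (x ^ 2 - y ^ 2) / bubbleDen x y
def W₂ (x y : ℝ) : ℝ := 4 * x * y / bubbleDen x y
def W₃ (x y : ℝ) : ℝ := ((x ^ 2 + y ^ 2) ^ 2 - 1) / bubbleDen x y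

def W₁_x (x y : ℝ) : ℝ := 4 * x * (1 + (x ^ 2 + y ^ 2) * (3 * y ^ 2 - x ^ 2)) / bubbleDen x y ^ 2
def W₂_x (x y : ℝ) : ℝ := 4 * y * (1 + (x ^ 2 + y ^ 2) * (y ^ 2 - 3 * x ^ 2)) / bubbleDen x y ^ 2
def W₃_x (x y : ℝ) : ℝ := 8 * x * (x ^ 2 + y ^ 2) / bubbleDen x y ^ 2

def W₁_xx (x y : ℝ) : ℝ :=
  4 * ((1 + (x ^ 2 + y ^ 2) * (3 * y ^ 2 - x ^ 2) + 4 * x ^ 2 * (y ^ 2 - x ^ 2)) * bubbleDen x y -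
    8 * x ^ 2 * (x ^ 2 + y ^ 2) * (1 + (x ^ 2 + y ^ 2) * (3 * y ^ 2 - x ^ 2))) / bubbleDen x y ^ 3
def W₂_xx (x y : ℝ) : ℝ :=
  -16 * x * y * ((3 * x ^ 2 + y ^ 2) * bubbleDen x y +
    2 * (x ^ 2 + y ^ 2) * (1 + (x ^ 2 + y ^ 2) * (y ^ 2 - 3 * x ^ 2))) / bubbleDen x y ^ 3
def W₃_xx (x y : ℝ) : ℝ :=
  8 * ((3 * x ^ 2 + y ^ 2) * bubbleDen x y - 8 * x ^ 2 * (x ^ 2 + y ^ 2) ^ 2) / bubbleDen x y ^ 3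

section ComponentDerivatives

variable (x y : ℝ)

lemma bubbleDen_pos : 0 < bubbleDen x y := by unfold bubbleDen; positivity

lemma hasDerivAt_bubbleDen : HasDerivAt (bubbleDen · y) (4 * x * (x ^ 2 + y ^ 2)) x := by
  refine ((((hasDerivAt_pow 2 x).add_const (y ^ 2)).fun_pow 2).add_const 1).congr_deriv ?_
  norm_num; ring

lemma hasDerivAt_W₁ : HasDerivAt (W₁ · y) (W₁_x x y) x := by
  have hN : HasDerivAt (fun x => 2 * (x ^ 2 - y ^ 2)) (4 * x) x := by
    refine (((hasDerivAt_pow 2 x).sub_const (y ^ 2)).const_mul 2).congr_deriv ?_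
    norm_num; ring
  refine (hN.div (hasDerivAt_bubbleDen x y) (bubbleDen_pos x y).ne').congr_deriv ?_
  have := (bubbleDen_pos x y).ne'
  simp only [W₁_x]; field_simp; unfold bubbleDen; ring

lemma hasDerivAt_W₂ : HasDerivAt (W₂ · y) (W₂_x x y) x := by
  have hN : HasDerivAt (fun x => 4 * x * y) (4 * y) x :=
    (((hasDerivAt_id' x).const_mul 4).mul_const y).congr_deriv (by ring)
  refine (hN.div (hasDerivAt_bubbleDen x y) (bubbleDen_pos x y).ne').congr_deriv ?_
  have := (bubbleDen_pos x y).ne'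
  simp only [W₂_x]; field_simp; unfold bubbleDen; ring

lemma hasDerivAt_W₃ : HasDerivAt (W₃ · y) (W₃_x x y) x := by
  have hN : HasDerivAt (fun x => (x ^ 2 + y ^ 2) ^ 2 - 1) (4 * x * (x ^ 2 + y ^ 2)) x := by
    refine ((((hasDerivAt_pow 2 x).add_const (y ^ 2)).fun_pow 2).sub_const 1).congr_deriv ?_
    norm_num; ring
  refine (hN.div (hasDerivAt_bubbleDen x y) (bubbleDen_pos x y).ne').congr_deriv ?_
  have := (bubbleDen_pos x y).ne'
  simp only [W₃_x]; field_simp; unfold bubbleDen; ring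

lemma hasDerivAt_W₁_x : HasDerivAt (W₁_x · y) (W₁_xx x y) x := by
  have hN : HasDerivAt (fun x => 4 * x * (1 + (x ^ 2 + y ^ 2) * (3 * y ^ 2 - x ^ 2)))
      (4 * (1 + (x ^ 2 + y ^ 2) * (3 * y ^ 2 - x ^ 2) + 4 * x ^ 2 * (y ^ 2 - x ^ 2))) x := by
    refine (((hasDerivAt_id' x).const_mul 4).mul ((((hasDerivAt_pow 2 x).add_const (y ^ 2)).mul
      ((hasDerivAt_pow 2 x).const_sub (3 * y ^ 2))).const_add 1)).congr_deriv ?_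
    norm_num; ring
  refine (hN.div ((hasDerivAt_bubbleDen x y).fun_pow 2)
    (pow_ne_zero 2 (bubbleDen_pos x y).ne')).congr_deriv ?_
  have := (bubbleDen_pos x y).ne'
  simp only [W₁_xx]; field_simp; ring

lemma hasDerivAt_W₂_x : HasDerivAt (W₂_x · y) (W₂_xx x y) x := by
  have hN : HasDerivAt (fun x => 4 * y * (1 + (x ^ 2 + y ^ 2) * (y ^ 2 - 3 * x ^ 2)))
      (-16 * x * y * (3 * x ^ 2 + y ^ 2)) x := by
    refine (((((hasDerivAt_pow 2 x).add_const (y ^ 2)).mul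
      (((hasDerivAt_pow 2 x).const_mul 3).const_sub (y ^ 2))).const_add 1).const_mul
      (4 * y)).congr_deriv ?_
    norm_num; ring
  refine (hN.div ((hasDerivAt_bubbleDen x y).fun_pow 2)
    (pow_ne_zero 2 (bubbleDen_pos x y).ne')).congr_deriv ?_
  have := (bubbleDen_pos x y).ne'
  simp only [W₂_xx]; field_simp; ring

lemma hasDerivAt_W₃_x : HasDerivAt (W₃_x · y) (W₃_xx x y) x := by
  have hN : HasDerivAt (fun x => 8 * x * (x ^ 2 + y ^ 2)) (8 * (3 * x ^ 2 + y ^ 2)) x := by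
    refine (((hasDerivAt_id' x).const_mul 8).mul
      ((hasDerivAt_pow 2 x).add_const (y ^ 2))).congr_deriv ?_
    norm_num; ring
  refine (hN.div ((hasDerivAt_bubbleDen x y).fun_pow 2)
    (pow_ne_zero 2 (bubbleDen_pos x y).ne')).congr_deriv ?_
  have := (bubbleDen_pos x y).ne'
  simp only [W₃_xx]; field_simp; unfold bubbleDen; ring

end ComponentDerivatives

lemma W_apply (z : ℂ) : W z = e3 (W₁ z.re z.im) (W₂ z.re z.im) (W₃ z.re z.im) := rfl

lemma W_add_smul_one (z : ℂ) (t : ℝ) :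
    W (z + t • 1) = e3 (W₁ (z.re + t) z.im) (W₂ (z.re + t) z.im) (W₃ (z.re + t) z.im) := by
  simp [W_apply]

lemma W_add_smul_I (z : ℂ) (t : ℝ) :
    W (z + t • I) = e3 (-W₁ (z.im + t) z.re) (W₂ (z.im + t) z.re) (W₃ (z.im + t) z.re) := by
  simp only [W_apply, W₁, W₂, W₃, bubbleDen]
  congr 1 <;> simp <;> ring

lemma contDiff_W : ContDiff ℝ 2 W := by
  have hre : ContDiff ℝ 2 re := reCLM.contDiff
  have him : ContDiff ℝ 2 im := imCLM.contDiff
  rw [contDiff_euclidean]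
  intro i
  fin_cases i <;> simp only [W_apply, W₁, W₂, W₃, bubbleDen, e3] <;> simp <;>
    exact ContDiff.div (by fun_prop) (by fun_prop) fun z => by positivity

lemma pdx_W (z : ℂ) : pdx W z = e3 (W₁_x z.re z.im) (W₂_x z.re z.im) (W₃_x z.re z.im) := by
  rw [pdx, fderiv_apply_eq_deriv_comp_add_smul (contDiff_W.differentiable two_ne_zero z)]
  simp only [W_add_smul_one]
  exact deriv_comp_const_add_zero (f := fun s => e3 (W₁ s z.im) (W₂ s z.im) (W₃ s z.im))
    ((hasDerivAt_W₁ _ _).e3 (hasDerivAt_W₂ _ _) (hasDerivAt_W₃ _ _))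

lemma pdy_W (z : ℂ) : pdy W z = e3 (-W₁_x z.im z.re) (W₂_x z.im z.re) (W₃_x z.im z.re) := by
  rw [pdy, fderiv_apply_eq_deriv_comp_add_smul (contDiff_W.differentiable two_ne_zero z)]
  simp only [W_add_smul_I]
  exact deriv_comp_const_add_zero (f := fun s => e3 (-W₁ s z.re) (W₂ s z.re) (W₃ s z.re))
    ((hasDerivAt_W₁ _ _).neg.e3 (hasDerivAt_W₂ _ _) (hasDerivAt_W₃ _ _))

lemma pdx_pdx_W (z : ℂ) :
    pdx (pdx W) z = e3 (W₁_xx z.re z.im) (W₂_xx z.re z.im) (W₃_xx z.re z.im) := by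
  unfold pdx
  rw [fderiv_fderiv_apply_eq_deriv_deriv_comp_add_smul contDiff_W]
  simp only [W_add_smul_one]
  exact deriv_deriv_comp_const_add_zero (f := fun s => e3 (W₁ s z.im) (W₂ s z.im) (W₃ s z.im))
    (fun s => (hasDerivAt_W₁ s _).e3 (hasDerivAt_W₂ s _) (hasDerivAt_W₃ s _))
    ((hasDerivAt_W₁_x _ _).e3 (hasDerivAt_W₂_x _ _) (hasDerivAt_W₃_x _ _))

lemma pdy_pdy_W (z : ℂ) :
    pdy (pdy W) z = e3 (-W₁_xx z.im z.re) (W₂_xx z.im z.re) (W₃_xx z.im z.re) := by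
  unfold pdy
  rw [fderiv_fderiv_apply_eq_deriv_deriv_comp_add_smul contDiff_W]
  simp only [W_add_smul_I]
  exact deriv_deriv_comp_const_add_zero (f := fun s => e3 (-W₁ s z.re) (W₂ s z.re) (W₃ s z.re))
    (fun s => (hasDerivAt_W₁ s _).neg.e3 (hasDerivAt_W₂ s _) (hasDerivAt_W₃ s _))
    ((hasDerivAt_W₁_x _ _).neg.e3 (hasDerivAt_W₂_x _ _) (hasDerivAt_W₃_x _ _))

lemma lap_W (z : ℂ) :
    lap W z = -(32 * (z.re ^ 2 + z.im ^ 2) / bubbleDen z.re z.im ^ 2) • W z := by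
  have := (bubbleDen_pos z.re z.im).ne'
  have := (bubbleDen_pos z.im z.re).ne'
  rw [lap, pdx_pdx_W, pdy_pdy_W, W_apply]
  ext i; fin_cases i <;> simp [e3, W₁, W₂, W₃, W₁_xx, W₂_xx, W₃_xx] <;> field_simp <;>
    unfold bubbleDen <;> ring

lemma cross_pdx_W_pdy_W (z : ℂ) :
    cross (pdx W z) (pdy W z) = -(16 * (z.re ^ 2 + z.im ^ 2) / bubbleDen z.re z.im ^ 2) • W z := by
  have := (bubbleDen_pos z.re z.im).ne'
  have := (bubbleDen_pos z.im z.re).ne'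
  rw [pdx_W, pdy_W, W_apply]
  ext i; fin_cases i <;> simp [cross, e3, W₁, W₂, W₃, W₁_x, W₂_x, W₃_x] <;> field_simp <;>
    unfold bubbleDen <;> ring

/-- The degree-2 H-bubble solves the H-system on all of `ℝ²`. -/
theorem W_solves_H_system : IsHSolution W Set.univ := by
  refine ⟨contDiff_W.contDiffOn, fun z _ => ?_⟩
  rw [lap_W, cross_pdx_W_pdy_W, smul_smul]
  congr 1
  ring
end
end

section
/- Fix ρ ∈ (0,1) and let g_ρ : 𝔻 → ℝ³ be given by g_ρ(x,y) = 2( (ρ(x²+y²)−x+y)(ρ(x²+y²)−x−y)/(ρ²(x²+y²)−2ρx+1)², 2(x−ρ(x²+y²))y/(ρ²(x²+y²)−2ρx+1)², 0 ). For (x,y) ∈ 𝔻 set u = ∂²g_ρ/∂x²(x,y) ∈ ℝ³ and v = ∂²g_ρ/∂x∂y(x,y) ∈ ℝ³, where |·| is the Euclidean norm on ℝ³. Then |u|² + |v|² + 2|u ∧ v| = 64(4ρ(ρ(x²+y²)+x)+1)/(ρ²(x²+y²)−2xρ+1)⁴ and |u|² + |v|² − 2|u ∧ v| = 0. -/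
noncomputable section

/-- The vector-valued harmonic map `g_ρ` on the unit disk. -/
def gRho (ρ : ℝ) : ℂ → R3 := fun z =>
  e3 (2 * ((ρ * (z.re ^ 2 + z.im ^ 2) - z.re + z.im) *
        (ρ * (z.re ^ 2 + z.im ^ 2) - z.re - z.im) /
      (ρ ^ 2 * (z.re ^ 2 + z.im ^ 2) - 2 * ρ * z.re + 1) ^ 2))
    (2 * (2 * (z.re - ρ * (z.re ^ 2 + z.im ^ 2)) * z.im /
      (ρ ^ 2 * (z.re ^ 2 + z.im ^ 2) - 2 * ρ * z.re + 1) ^ 2))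
    0

/-!
Writing `E c = (Re c, Im c, 0)`, the map `g_ρ` is `E ∘ f` for the holomorphic function
`f w = 2w² / (1 - ρw)²`. By the Cauchy–Riemann equations `∂ₓ(E ∘ f) = E f'` and
`∂_y(E ∘ f) = E (i f')`, so `u = E f''` and `v = E (i f'')`: two orthogonal vectors of length
`|f''|` in the horizontal plane, with `u ∧ v = |f''|² e₃`. Hence the two quantities are
`4|f''|²` and `0`, and `|f''|² = 16 |1 + 2ρz|² / |1 - ρz|⁸`.
-/

namespace GRho

open Complex Filter Topology

def embedC : ℂ →L[ℝ] R3 :=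
  reCLM.smulRight (e3 1 0 0) + imCLM.smulRight (e3 0 1 0)

theorem embedC_apply (c : ℂ) : embedC c = e3 c.re c.im 0 := by
  ext i
  fin_cases i <;> simp [embedC, e3]

theorem norm_embedC (c : ℂ) : ‖embedC c‖ = ‖c‖ := by
  rw [embedC_apply, EuclideanSpace.norm_eq, norm_eq_sqrt_sq_add_sq]
  simp [e3, Fin.sum_univ_three]

theorem norm_e3_zero_zero (t : ℝ) : ‖e3 0 0 t‖ = |t| := by
  rw [EuclideanSpace.norm_eq]
  simp [e3, Fin.sum_univ_three, Real.sqrt_sq_eq_abs]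

theorem cross_embedC_I_mul (c : ℂ) : cross (embedC c) (embedC (I * c)) = e3 0 0 (‖c‖ ^ 2) := by
  rw [embedC_apply, embedC_apply, Complex.sq_norm, normSq_apply]
  simp [cross, e3]

theorem norm_cross_embedC_I_mul (c : ℂ) : ‖cross (embedC c) (embedC (I * c))‖ = ‖c‖ ^ 2 := by
  rw [cross_embedC_I_mul, norm_e3_zero_zero, abs_sq]

theorem fderiv_embedC_comp_apply {f : ℂ → ℂ} {f' z : ℂ} (hf : HasDerivAt f f' z) (v : ℂ) :
    fderiv ℝ (embedC ∘ f) z v = embedC (v * f') := by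
  rw [(embedC.hasFDerivAt.comp z (hf.hasFDerivAt.restrictScalars ℝ)).fderiv]
  simp

section HolomorphicComp

variable {g : ℂ → R3} {f f' : ℂ → ℂ} {z f₁ f₂ : ℂ}

theorem pdx_eq_of_eventuallyEq (hg : g =ᶠ[𝓝 z] embedC ∘ f) (hf : HasDerivAt f f₁ z) :
    pdx g z = embedC f₁ := by
  rw [pdx, hg.fderiv_eq, fderiv_embedC_comp_apply hf, one_mul]

theorem pdy_eq_of_eventuallyEq (hg : g =ᶠ[𝓝 z] embedC ∘ f) (hf : HasDerivAt f f₁ z) :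
    pdy g z = embedC (I * f₁) := by
  rw [pdy, hg.fderiv_eq, fderiv_embedC_comp_apply hf]

theorem pdx_pdx_eq_of_eventuallyEq (hg : g =ᶠ[𝓝 z] embedC ∘ f)
    (hf : ∀ᶠ w in 𝓝 z, HasDerivAt f (f' w) w) (hf' : HasDerivAt f' f₂ z) :
    pdx (pdx g) z = embedC f₂ := by
  refine pdx_eq_of_eventuallyEq ?_ hf'
  filter_upwards [hg.eventuallyEq_nhds, hf] with w hgw hfw using pdx_eq_of_eventuallyEq hgw hfw

theorem pdx_pdy_eq_of_eventuallyEq (hg : g =ᶠ[𝓝 z] embedC ∘ f)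
    (hf : ∀ᶠ w in 𝓝 z, HasDerivAt f (f' w) w) (hf' : HasDerivAt f' f₂ z) :
    pdx (pdy g) z = embedC (I * f₂) := by
  refine pdx_eq_of_eventuallyEq ?_ (hf'.const_mul I)
  filter_upwards [hg.eventuallyEq_nhds, hf] with w hgw hfw using pdy_eq_of_eventuallyEq hgw hfw

end HolomorphicComp

def gHol (a w : ℂ) : ℂ := 2 * w ^ 2 / (1 - a * w) ^ 2

def gHolDeriv (a w : ℂ) : ℂ := 4 * w / (1 - a * w) ^ 3

def gHolDeriv2 (a w : ℂ) : ℂ := 4 * (1 + 2 * a * w) / (1 - a * w) ^ 4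

section Derivatives

variable {a w : ℂ}

theorem hasDerivAt_one_sub_mul : HasDerivAt (fun w => 1 - a * w) (-a) w := by
  simpa using ((hasDerivAt_id w).const_mul a).const_sub 1

theorem hasDerivAt_gHol (hw : 1 - a * w ≠ 0) : HasDerivAt (gHol a) (gHolDeriv a w) w := by
  have hnum : HasDerivAt (fun w => 2 * w ^ 2) (2 * (2 * w)) w := by
    simpa using (hasDerivAt_pow 2 w).const_mul (2 : ℂ)
  refine (hnum.div (hasDerivAt_one_sub_mul.fun_pow 2) (pow_ne_zero 2 hw)).congr_deriv ?_
  rw [gHolDeriv]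
  norm_num
  field_simp
  ring

theorem hasDerivAt_gHolDeriv (hw : 1 - a * w ≠ 0) :
    HasDerivAt (gHolDeriv a) (gHolDeriv2 a w) w := by
  have hnum : HasDerivAt (fun w => 4 * w) 4 w := by
    simpa using (hasDerivAt_id w).const_mul (4 : ℂ)
  refine (hnum.div (hasDerivAt_one_sub_mul.fun_pow 3) (pow_ne_zero 3 hw)).congr_deriv ?_
  rw [gHolDeriv2]
  norm_num
  field_simp
  ring

theorem one_sub_mul_ne_zero (ha : ‖a‖ ≤ 1) (hw : ‖w‖ < 1) : 1 - a * w ≠ 0 := by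
  refine sub_ne_zero.mpr (ne_of_apply_ne norm (ne_of_gt ?_))
  rw [norm_one, norm_mul]
  exact (mul_le_of_le_one_left (norm_nonneg w) ha).trans_lt hw

end Derivatives

theorem normSq_one_sub_ofReal_mul (ρ : ℝ) (w : ℂ) :
    normSq (1 - ρ * w) = ρ ^ 2 * (w.re ^ 2 + w.im ^ 2) - 2 * ρ * w.re + 1 := by
  simp [normSq_apply]
  ring

/-- At the pole `w = 1/ρ` both sides are `0`, because division by zero returns `0`. -/
theorem gRho_eq_embedC_comp (ρ : ℝ) : gRho ρ = embedC ∘ gHol ρ := by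
  funext w
  have hden : normSq ((1 - ρ * w) ^ 2) =
      (ρ ^ 2 * (w.re ^ 2 + w.im ^ 2) - 2 * ρ * w.re + 1) ^ 2 := by
    rw [map_pow, normSq_one_sub_ofReal_mul]
  rw [Function.comp_apply, embedC_apply, gHol, div_eq_mul_inv]
  simp only [mul_re, mul_im, inv_re, inv_im, hden]
  simp only [gRho, mul_re, mul_im, sub_re, sub_im, pow_two, ofReal_re, ofReal_im, one_re, one_im,
    re_ofNat, im_ofNat]
  congr 1 <;> ring

theorem sq_norm_gHolDeriv2 (ρ : ℝ) (z : ℂ) :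
    ‖gHolDeriv2 ρ z‖ ^ 2 = 16 * (4 * ρ * (ρ * (z.re ^ 2 + z.im ^ 2) + z.re) + 1) /
      (ρ ^ 2 * (z.re ^ 2 + z.im ^ 2) - 2 * z.re * ρ + 1) ^ 4 := by
  have hnum : normSq (4 * (1 + 2 * ρ * z)) =
      16 * (4 * ρ * (ρ * (z.re ^ 2 + z.im ^ 2) + z.re) + 1) := by
    simp [normSq_apply]
    ring
  rw [Complex.sq_norm, gHolDeriv2, map_div₀, map_pow, hnum, normSq_one_sub_ofReal_mul]
  ring

end GRho

open GRho in
/-- With `u = ∂²g_ρ/∂x²` and `v = ∂²g_ρ/∂x∂y` at a point of the open unit disk,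
`|u|² + |v|² + 2|u ∧ v| = 64(4ρ(ρ(x²+y²)+x)+1)/(ρ²(x²+y²)−2xρ+1)⁴` and
`|u|² + |v|² − 2|u ∧ v| = 0`. -/
theorem g_rho_second_derivatives (ρ : ℝ) (hρ : ρ ∈ Set.Ioo (0 : ℝ) 1)
    (z : ℂ) (hz : z ∈ Metric.ball (0 : ℂ) 1) :
    ‖pdx (pdx (gRho ρ)) z‖ ^ 2 + ‖pdx (pdy (gRho ρ)) z‖ ^ 2 +
        2 * ‖cross (pdx (pdx (gRho ρ)) z) (pdx (pdy (gRho ρ)) z)‖ =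
      64 * (4 * ρ * (ρ * (z.re ^ 2 + z.im ^ 2) + z.re) + 1) /
        (ρ ^ 2 * (z.re ^ 2 + z.im ^ 2) - 2 * z.re * ρ + 1) ^ 4 ∧
    ‖pdx (pdx (gRho ρ)) z‖ ^ 2 + ‖pdx (pdy (gRho ρ)) z‖ ^ 2 -
        2 * ‖cross (pdx (pdx (gRho ρ)) z) (pdx (pdy (gRho ρ)) z)‖ = 0 := by
  have hc : 1 - (ρ : ℂ) * z ≠ 0 :=
    one_sub_mul_ne_zero (by simp [abs_of_pos hρ.1, hρ.2.le]) (mem_ball_zero_iff.mp hz)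
  have hnear : ∀ᶠ w in nhds z, HasDerivAt (gHol ρ) (gHolDeriv ρ w) w :=
    ((continuous_const.sub (continuous_const.mul continuous_id)).continuousAt.eventually_ne
      hc).mono fun w hw => hasDerivAt_gHol hw
  have hg : gRho ρ =ᶠ[nhds z] embedC ∘ gHol ρ := by rw [gRho_eq_embedC_comp]
  rw [pdx_pdx_eq_of_eventuallyEq hg hnear (hasDerivAt_gHolDeriv hc),
    pdx_pdy_eq_of_eventuallyEq hg hnear (hasDerivAt_gHolDeriv hc), norm_cross_embedC_I_mul,
    norm_embedC, norm_embedC, norm_mul, Complex.norm_I, one_mul, sq_norm_gHolDeriv2]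
  constructor <;> ring
end
end
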